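/- For every real number s with 0 < s ≤ e^{−π√3}, one has ∏_{n=1}^∞ (1 − s^{n−1/2})² ≥ e^{−4√s/(1−s)} and e^{−4√s/(1−s)} > 0.76. -/

import Mathlib

/-!
Write `s ^ (n + 1/2) = s ^ n √s`. For `0 ≤ x ≤ 1/2` one has `log (1 - x) ≥ -2x`, so the logarithm
of the product is at least `-4 ∑ s ^ n √s = -4 √s / (1 - s)`. The hypothesis `s ≤ e^{-π√3}` gives
`s < 1/225`, whence `4 √s / (1 - s) < 15/56` and `e^{-15/56} > 0.76`.
-/

open Real

namespace Real

theorem neg_two_mul_le_log_one_sub {x : ℝ} (hx₀ : 0 ≤ x) (hx : x ≤ 1 / 2) :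
    -(2 * x) ≤ log (1 - x) := by
  have hpos : 0 < 1 - x := by linarith
  calc -(2 * x) ≤ 1 - (1 - x)⁻¹ := by
        have : 1 ≤ (1 + 2 * x) * (1 - x) := by nlinarith
        linarith [(inv_le_iff_one_le_mul₀ hpos).2 this]
    _ ≤ log (1 - x) := one_sub_inv_le_log_of_pos hpos

theorem exp_le_tprod_of_hasSum_le_log {ι : Type*} {f g : ι → ℝ} {a : ℝ} (hf₀ : ∀ i, 0 < f i)
    (hf₁ : ∀ i, f i ≤ 1) (hg : HasSum g a) (hgf : ∀ i, g i ≤ log (f i)) :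
    exp a ≤ ∏' i, f i := by
  have hlog : Summable fun i ↦ log (f i) :=
    summable_neg_iff.mp <| hg.summable.neg.of_nonneg_of_le
      (fun i ↦ neg_nonneg.2 (log_nonpos (hf₀ i).le (hf₁ i))) (fun i ↦ neg_le_neg (hgf i))
  rw [← rexp_tsum_eq_tprod hf₀ hlog]
  exact exp_le_exp.2 (hasSum_le hgf hg hlog.hasSum)

theorem rpow_natCast_add_half {s : ℝ} (hs : 0 ≤ s) (n : ℕ) :
    s ^ ((n : ℝ) + 1 / 2) = s ^ n * √s := by
  rw [rpow_add' hs (by positivity), rpow_natCast, sqrt_eq_rpow]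

theorem exp_le_tprod_one_sub_rpow_add_half_sq {s : ℝ} (hs₀ : 0 ≤ s) (hs : s ≤ 1 / 4) :
    exp (-4 * √s / (1 - s)) ≤ ∏' n : ℕ, (1 - s ^ ((n : ℝ) + 1 / 2)) ^ 2 := by
  have hsqrt : √s ≤ 1 / 2 := by
    rw [sqrt_le_left (by norm_num)]
    linarith
  have hx₀ (n : ℕ) : 0 ≤ s ^ n * √s := by positivity
  have hx (n : ℕ) : s ^ n * √s ≤ 1 / 2 :=
    le_trans (mul_le_of_le_one_left (sqrt_nonneg s) (pow_le_one₀ hs₀ (by linarith))) hsqrt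
  have hsum : HasSum (fun n : ℕ ↦ -4 * (s ^ n * √s)) (-4 * √s / (1 - s)) := by
    rw [mul_div_right_comm, div_eq_mul_inv]
    simp_rw [← mul_assoc]
    exact ((hasSum_geometric_of_lt_one hs₀ (by linarith)).mul_left (-4)).mul_right (√s)
  simp_rw [rpow_natCast_add_half hs₀]
  refine exp_le_tprod_of_hasSum_le_log (fun n ↦ ?_) (fun n ↦ ?_) hsum (fun n ↦ ?_)
  · have := hx n
    nlinarith
  · exact pow_le_one₀ (by linarith [hx n]) (by linarith [hx₀ n])
  · rw [log_pow, Nat.cast_ofNat]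
    linarith [neg_two_mul_le_log_one_sub (hx₀ n) (hx n)]

end Real

theorem two_hundred_twenty_five_lt_exp_pi_mul_sqrt_three : (225 : ℝ) < exp (π * √3) := by
  have hsqrt : (1.732 : ℝ) < √3 := (lt_sqrt (by norm_num)).2 (by norm_num)
  have he : (2.7182818283 : ℝ) ^ 5 < exp 1 ^ 5 :=
    pow_lt_pow_left₀ exp_one_gt_d9 (by norm_num) (by norm_num)
  have hq := quadratic_le_exp_of_nonneg (x := 0.438) (by norm_num)
  calc (225 : ℝ) < exp 1 ^ 5 * exp 0.438 := by nlinarith [exp_pos 0.438]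
    _ = exp 5.438 := by rw [← exp_nat_mul, ← exp_add]; norm_num
    _ < exp (π * √3) := exp_lt_exp.2 (by nlinarith [pi_gt_d2])

theorem lt_exp_neg_fifteen_div_fifty_six : (0.76 : ℝ) < exp (-(15 / 56)) :=
  calc (0.76 : ℝ) < (1 - 15 / 448) ^ 8 := by norm_num
    _ ≤ exp (-(15 / 448)) ^ 8 := by
        gcongr
        linarith [add_one_le_exp (-(15 / 448) : ℝ)]
    _ = exp (-(15 / 56)) := by rw [← exp_nat_mul]; norm_num

theorem lt_exp_neg_four_mul_sqrt_div_one_sub {s : ℝ} (hs : s < 1 / 225) :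
    (0.76 : ℝ) < exp (-4 * √s / (1 - s)) := by
  have hsqrt : √s < 1 / 15 := by
    rw [sqrt_lt' (by norm_num)]
    linarith
  have hbound : -(15 / 56 : ℝ) ≤ -4 * √s / (1 - s) := by
    rw [neg_mul, neg_div, neg_le_neg_iff, div_le_iff₀ (by linarith)]
    linarith
  exact lt_exp_neg_fifteen_div_fifty_six.trans_le (exp_le_exp.2 hbound)

theorem prod_one_sub_ge (s : ℝ) (hs : 0 < s) (hs' : s ≤ Real.exp (-Real.pi * Real.sqrt 3)) :
    Real.exp (-4 * Real.sqrt s / (1 - s)) ≤ (∏' n : ℕ, (1 - s ^ ((n : ℝ) + 1 / 2)) ^ 2) ∧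
    0.76 < Real.exp (-4 * Real.sqrt s / (1 - s)) := by
  have hsmall : s < 1 / 225 := by
    rw [neg_mul, exp_neg] at hs'
    refine hs'.trans_lt ?_
    rw [one_div]
    exact inv_strictAnti₀ (by norm_num) two_hundred_twenty_five_lt_exp_pi_mul_sqrt_three
  exact ⟨exp_le_tprod_one_sub_rpow_add_half_sq hs.le (by linarith),
    lt_exp_neg_four_mul_sqrt_div_one_sub hsmall⟩
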